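/- Define a Lie algebra g_7 with basis e_1,...,e_4 and nonzero brackets [e_1,e_2] = e_3, [e_1,e_3] = e_2, [e_2,e_3] = e_4. The map e_1 ↦ e_{11} + e_{33}, e_2 ↦ (√2/2)(e_{12} - e_{23}), e_3 ↦ (√2/2)(e_{12} + e_{23}), e_4 ↦ e_{13} is an injective Lie algebra homomorphism into gl(3,C). -/

import Mathlib

open Matrix

/-- The 3×3 matrix unit `e_{ij}` (indices 0-based). -/
noncomputable def E3 (i j : Fin 3) : Matrix (Fin 3) (Fin 3) ℂ := Matrix.single i j 1

lemma E3_mul (i j k l : Fin 3) : E3 i j * E3 k l = if j = k then E3 i l else 0 := by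
  split_ifs with h
  · subst h; simp [E3, Matrix.single_mul_single_same]
  · simp [E3, Matrix.single_mul_single_of_ne, h]

lemma sqrt2c : ((Real.sqrt 2 : ℂ) / 2) * ((Real.sqrt 2 : ℂ) / 2) = 1 / 2 := by
  have : (Real.sqrt 2 : ℝ) * Real.sqrt 2 = 2 := Real.mul_self_sqrt (by norm_num)
  rw [div_mul_div_comm, ← Complex.ofReal_mul, this]
  norm_num

lemma sqrt2c_ne : ((Real.sqrt 2 : ℂ) / 2) ≠ 0 := by
  simp only [ne_eq, div_eq_zero_iff, Complex.ofReal_eq_zero, OfNat.ofNat_ne_zero, or_false]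
  positivity

/-- The map `e₁ ↦ e₁₁ + e₃₃`, `e₂ ↦ (√2/2)(e₁₂ - e₂₃)`, `e₃ ↦ (√2/2)(e₁₂ + e₂₃)`,
`e₄ ↦ e₁₃` is an injective Lie algebra homomorphism of `g₇` (brackets `[e₁,e₂] = e₃`,
`[e₁,e₃] = e₂`, `[e₂,e₃] = e₄`, rest zero) into `gl(3,ℂ)`: the images are linearly
independent and satisfy the defining brackets. -/
theorem g7_faithful_rep :
    LinearIndependent ℂ
      ![E3 0 0 + E3 2 2, ((Real.sqrt 2 : ℂ) / 2) • (E3 0 1 - E3 1 2),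
        ((Real.sqrt 2 : ℂ) / 2) • (E3 0 1 + E3 1 2), E3 0 2] ∧
    ⁅E3 0 0 + E3 2 2, ((Real.sqrt 2 : ℂ) / 2) • (E3 0 1 - E3 1 2)⁆ =
      ((Real.sqrt 2 : ℂ) / 2) • (E3 0 1 + E3 1 2) ∧
    ⁅E3 0 0 + E3 2 2, ((Real.sqrt 2 : ℂ) / 2) • (E3 0 1 + E3 1 2)⁆ =
      ((Real.sqrt 2 : ℂ) / 2) • (E3 0 1 - E3 1 2) ∧
    ⁅E3 0 0 + E3 2 2, E3 0 2⁆ = 0 ∧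
    ⁅((Real.sqrt 2 : ℂ) / 2) • (E3 0 1 - E3 1 2),
      ((Real.sqrt 2 : ℂ) / 2) • (E3 0 1 + E3 1 2)⁆ = E3 0 2 ∧
    ⁅((Real.sqrt 2 : ℂ) / 2) • (E3 0 1 - E3 1 2), E3 0 2⁆ = 0 ∧
    ⁅((Real.sqrt 2 : ℂ) / 2) • (E3 0 1 + E3 1 2), E3 0 2⁆ = 0 := by
  refine ⟨?_, ?_, ?_, ?_, ?_, ?_, ?_⟩
  · rw [Fintype.linearIndependent_iff]
    intro g hg
    have h00 := congrFun (congrFun hg 0) 0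
    have h02 := congrFun (congrFun hg 0) 2
    have h01 := congrFun (congrFun hg 0) 1
    have h12 := congrFun (congrFun hg 1) 2
    simp [Fin.sum_univ_four, E3, Matrix.single, Matrix.sum_apply] at h00 h02 h01 h12
    have c := sqrt2c_ne
    have h00 := congrFun (congrFun hg 0) 0
    have h02 := congrFun (congrFun hg 0) 2
    have h01 := congrFun (congrFun hg 0) 1
    have h12 := congrFun (congrFun hg 1) 2
    simp [Fin.sum_univ_four, E3, Matrix.single, Matrix.sum_apply] at h00 h02 h01 h12
    have hg1 : g 1 = 0 := by
      have h : g 1 * ((Real.sqrt 2 : ℂ) / 2) = 0 := by linear_combination (h01 - h12) / 2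
      exact (mul_eq_zero.mp h).resolve_right sqrt2c_ne
    have hg2 : g 2 = 0 := by
      have h : g 2 * ((Real.sqrt 2 : ℂ) / 2) = 0 := by linear_combination (h01 + h12) / 2
      exact (mul_eq_zero.mp h).resolve_right sqrt2c_ne
    intro i
    fin_cases i <;> assumption
  all_goals
    rw [Ring.lie_def]
    simp only [smul_mul_assoc, mul_smul_comm, add_mul, mul_add, sub_mul, mul_sub,
      E3_mul, smul_smul, sqrt2c, Fin.reduceEq, reduceIte, if_true, if_false,
      ite_true, ite_false, smul_zero, neg_zero, add_zero, zero_add, sub_zero, zero_sub]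
    try module
    try (rw [smul_neg, smul_smul, sqrt2c]; module)
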